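/- Let J(κ) be the optimal value of the optimization problem max E_θ[R(θ)φ(θ)] subject to E_θ[C(θ)φ(θ)] ≤ κ over measurable φ: Θ → [0,1], where R: Θ → [0,1] and C: Θ → [0,1]^n. Then for any κ₁, κ₂ with all entries of κ₁ in (0,1], J(κ₁) - J(κ₂) ≤ (max_i max(κ₁^i - κ₂^i, 0) / min_i κ₁^i) · J(κ₁). -/
import Mathlib


open MeasureTheory

/-- The fluid LP value `J κ` (supremum over measurable controls
`φ : Θ → [0,1]` of the expected reward subject to expected consumption `≤ κ`)
satisfies `J κ₁ - J κ₂ ≤ (max_i (κ₁ i - κ₂ i)₊ / min_i κ₁ i) · J κ₁`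
whenever all entries of `κ₁` lie in `(0,1]`. -/
theorem stmt0 {Θ : Type*} [MeasurableSpace Θ] (μ : Measure Θ) [IsProbabilityMeasure μ]
    (n : ℕ) (hn : 0 < n)
    (R : Θ → ℝ) (C : Θ → Fin n → ℝ)
    (hR : ∀ θ, R θ ∈ Set.Icc (0:ℝ) 1) (hC : ∀ θ i, C θ i ∈ Set.Icc (0:ℝ) 1)
    (J : (Fin n → ℝ) → ℝ)
    (hJ : ∀ κ, J κ = sSup {x : ℝ | ∃ φ : Θ → ℝ, Measurable φ ∧
        (∀ θ, φ θ ∈ Set.Icc (0:ℝ) 1) ∧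
        (∀ i, ∫ θ, C θ i * φ θ ∂μ ≤ κ i) ∧
        x = ∫ θ, R θ * φ θ ∂μ})
    (κ₁ κ₂ : Fin n → ℝ) (hκ₁ : ∀ i, κ₁ i ∈ Set.Ioc (0:ℝ) 1) :
    J κ₁ - J κ₂ ≤ (⨆ i, max (κ₁ i - κ₂ i) 0) / (⨅ i, κ₁ i) * J κ₁ := by
  have hnth : Nonempty (Fin n) := ⟨⟨0, hn⟩⟩
  set S : (Fin n → ℝ) → Set ℝ := fun κ => {x : ℝ | ∃ φ : Θ → ℝ, Measurable φ ∧
        (∀ θ, φ θ ∈ Set.Icc (0:ℝ) 1) ∧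
        (∀ i, ∫ θ, C θ i * φ θ ∂μ ≤ κ i) ∧
        x = ∫ θ, R θ * φ θ ∂μ} with hS
  have hJ' : ∀ κ, J κ = sSup (S κ) := hJ
  set m := ⨅ i, κ₁ i with hm
  set D := ⨆ i, max (κ₁ i - κ₂ i) 0 with hD
  obtain ⟨i0, hi0⟩ := exists_eq_ciInf_of_finite (f := κ₁)
  have hmpos : 0 < m := by rw [hm, ← hi0]; exact (hκ₁ i0).1
  have hm_le : ∀ i, m ≤ κ₁ i := by
    intro i; rw [hm]; exact ciInf_le (Finite.bddBelow_range _) i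
  have hD_ge : ∀ i, max (κ₁ i - κ₂ i) 0 ≤ D := by
    intro i; rw [hD]; exact le_ciSup (Finite.bddAbove_range fun j => max (κ₁ j - κ₂ j) 0) i
  clear_value m D
  have hD0 : 0 ≤ D := le_trans (le_max_right (κ₁ i0 - κ₂ i0) 0) (hD_ge i0)
  -- bounds on elements of S κ
  have hIbnd : ∀ (φ : Θ → ℝ), (∀ θ, φ θ ∈ Set.Icc (0:ℝ) 1) →
      0 ≤ (∫ θ, R θ * φ θ ∂μ) ∧ (∫ θ, R θ * φ θ ∂μ) ≤ 1 := by
    intro φ hφ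
    constructor
    · exact integral_nonneg fun θ => mul_nonneg (hR θ).1 (hφ θ).1
    · calc (∫ θ, R θ * φ θ ∂μ) ≤ ∫ _, (1:ℝ) ∂μ := by
            apply integral_mono_of_nonneg
            · exact Filter.Eventually.of_forall fun θ => mul_nonneg (hR θ).1 (hφ θ).1
            · exact integrable_const 1
            · exact Filter.Eventually.of_forall fun θ =>
                mul_le_one₀ (hR θ).2 (hφ θ).1 (hφ θ).2
        _ = 1 := by simp
  have hbdd : ∀ κ, BddAbove (S κ) := by
    intro κ
    refine ⟨1, ?_⟩
    rintro x ⟨φ, -, hφ, -, rfl⟩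
    exact (hIbnd φ hφ).2
  have h0mem : (0:ℝ) ∈ S κ₁ := by
    refine ⟨fun _ => 0, measurable_const, fun θ => ⟨le_refl _, zero_le_one⟩, ?_, ?_⟩
    · intro i; simp; exact (hκ₁ i).1.le
    · simp
  have hJ1nn : 0 ≤ J κ₁ := by
    rw [hJ']; exact le_csSup (hbdd κ₁) h0mem
  have hJ2nn : 0 ≤ J κ₂ := by
    rw [hJ']
    apply Real.sSup_nonneg
    rintro x ⟨φ, -, hφ, -, rfl⟩
    exact (hIbnd φ hφ).1
  rcases le_or_gt 1 (D / m) with h1 | h1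
  · have := mul_le_mul_of_nonneg_right h1 hJ1nn
    rw [one_mul] at this
    linarith
  · set t := 1 - D / m with ht
    clear_value t
    have htpos : 0 < t := by simp [ht]; linarith
    have ht1 : t ≤ 1 := by
      have : 0 ≤ D / m := div_nonneg hD0 hmpos.le
      simp [ht]; linarith
    -- t * κ₁ i ≤ κ₂ i
    have htκ : ∀ i, t * κ₁ i ≤ κ₂ i := by
      intro i
      have h2 : D ≤ D / m * κ₁ i := by
        rw [div_mul_eq_mul_div, le_div_iff₀ hmpos]
        exact mul_le_mul_of_nonneg_left (hm_le i) hD0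
      have h3 : κ₁ i - κ₂ i ≤ D := le_trans (le_max_left _ _) (hD_ge i)
      have : t * κ₁ i = κ₁ i - D / m * κ₁ i := by rw [ht]; ring
      linarith
    have key : ∀ x ∈ S κ₁, t * x ∈ S κ₂ := by
      rintro x ⟨φ, hφm, hφ, hφc, rfl⟩
      refine ⟨fun θ => t * φ θ, measurable_const.mul hφm, ?_, ?_, ?_⟩
      · intro θ
        exact ⟨mul_nonneg htpos.le (hφ θ).1,
          le_trans (mul_le_mul ht1 (hφ θ).2 (hφ θ).1 zero_le_one) (by simp)⟩
      · intro i
        have : (∫ θ, C θ i * (t * φ θ) ∂μ) = t * ∫ θ, C θ i * φ θ ∂μ := by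
          rw [← integral_const_mul]
          congr 1; funext θ; ring
        rw [this]
        exact le_trans (mul_le_mul_of_nonneg_left (hφc i) htpos.le) (htκ i)
      · rw [← integral_const_mul]
        congr 1; funext θ; ring
    have hkey2 : t * J κ₁ ≤ J κ₂ := by
      rw [hJ' κ₁, hJ' κ₂]
      rw [mul_comm, ← le_div_iff₀ htpos]
      apply csSup_le ⟨0, h0mem⟩
      intro x hx
      rw [le_div_iff₀ htpos, mul_comm]
      exact le_csSup (hbdd κ₂) (key x hx)
    have : (1 - D / m) * J κ₁ ≤ J κ₂ := by rw [← ht]; exact hkey2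
    nlinarith
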